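/- Let μ, κ ∈ ℝ with μ > 0 and κ > 0, set σ = √(μ/κ), and let K₁ ∈ ℝ. For τ ∈ (0, 1/μ) define q̃₁^τ(x) = ( −√(2μ) σ / √(1 − μτ) ) · sech( √(μ(1 − μτ)) x + K₁ ) · tanh( √(μ(1 − μτ)) x + K₁ ), and define v(x) = −√(2μ) σ · sech( √μ x + K₁ ) · tanh( √μ x + K₁ ), which equals the derivative (u⁺)'(x) of the focusing NLS ground state u⁺(x) = √2 σ sech( √μ x + K₁ ). Then there exist constants τ₀ ∈ (0, 1/μ) and C > 0 such that for all τ ∈ (0, τ₀) and all x ∈ ℝ, |q̃₁^τ(x) − v(x)| ≤ C τ. In particular, q̃₁^τ converges uniformly on ℝ, and linearly in τ, to (u⁺)' as τ → 0. -/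

import Mathlib

noncomputable def Gfun (y : ℝ) : ℝ := Real.sinh y / Real.cosh y ^ 2

lemma Gfun_eq (y : ℝ) : (1 / Real.cosh y) * Real.tanh y = Gfun y := by
  have h := Real.cosh_pos y
  rw [Real.tanh_eq_sinh_div_cosh, Gfun, div_mul_div_comm, one_mul, ← pow_two]

lemma abs_sinh_le_cosh (y : ℝ) : |Real.sinh y| ≤ Real.cosh y := by
  have h1 := Real.cosh_pos y
  have h2 := Real.cosh_sq y
  rw [abs_le]
  constructor <;> nlinarith [sq_nonneg (Real.sinh y - Real.cosh y), sq_nonneg (Real.sinh y + Real.cosh y)]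

lemma Gfun_abs_le_one (y : ℝ) : |Gfun y| ≤ 1 := by
  have h1 := Real.cosh_pos y
  have h2 := Real.one_le_cosh y
  have h3 := abs_sinh_le_cosh y
  rw [Gfun, abs_div, abs_pow, abs_of_pos h1]
  rw [div_le_one (by positivity)]
  nlinarith

lemma inv_cosh_le (y : ℝ) : 1 / Real.cosh y ≤ 2 * Real.exp (-|y|) := by
  have h1 := Real.cosh_pos y
  have key : Real.exp |y| ≤ 2 * Real.cosh y := by
    rw [Real.cosh_eq]
    rcases abs_cases y with ⟨h, _⟩ | ⟨h, _⟩ <;> rw [h] <;>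
      nlinarith [Real.exp_pos y, Real.exp_pos (-y)]
  have h2 : 2 * Real.exp (-|y|) = 2 / Real.exp |y| := by rw [Real.exp_neg]; ring
  rw [h2, div_le_div_iff₀ h1 (Real.exp_pos _), one_mul]
  linarith

lemma hasDerivAt_Gfun (y : ℝ) : HasDerivAt Gfun
    ((Real.cosh y ^ 2 - 2 * Real.sinh y ^ 2) / Real.cosh y ^ 3) y := by
  have h1 := (Real.cosh_pos y).ne'
  have hd : HasDerivAt (fun z => Real.sinh z / Real.cosh z ^ 2)
      ((Real.cosh y * Real.cosh y ^ 2 - Real.sinh y * (2 * Real.cosh y ^ 1 * Real.sinh y)) / (Real.cosh y ^ 2) ^ 2) y :=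
    (Real.hasDerivAt_sinh y).div ((Real.hasDerivAt_cosh y).pow 2) (by positivity)
  convert hd using 1
  · rfl
  field_simp

lemma Gfun_deriv_bound (y : ℝ) :
    |(Real.cosh y ^ 2 - 2 * Real.sinh y ^ 2) / Real.cosh y ^ 3| ≤ 6 * Real.exp (-|y|) := by
  have h1 := Real.cosh_pos y
  have h3 := abs_sinh_le_cosh y
  have h4 := inv_cosh_le y
  have step : |(Real.cosh y ^ 2 - 2 * Real.sinh y ^ 2) / Real.cosh y ^ 3| ≤ 3 / Real.cosh y := by
    rw [abs_div, abs_of_pos (by positivity : (0:ℝ) < Real.cosh y ^ 3), div_le_div_iff₀ (by positivity) h1]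
    have : |Real.cosh y ^ 2 - 2 * Real.sinh y ^ 2| ≤ 3 * Real.cosh y ^ 2 := by
      rw [abs_le]
      constructor <;> nlinarith [sq_abs (Real.sinh y), abs_nonneg (Real.sinh y), sq_nonneg (Real.sinh y)]
    nlinarith [sq_nonneg (Real.cosh y)]
  calc |(Real.cosh y ^ 2 - 2 * Real.sinh y ^ 2) / Real.cosh y ^ 3| ≤ 3 / Real.cosh y := step
    _ = 3 * (1 / Real.cosh y) := by ring
    _ ≤ 3 * (2 * Real.exp (-|y|)) := by nlinarith
    _ = 6 * Real.exp (-|y|) := by ring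

lemma Gfun_lip (a b B : ℝ) (hB : ∀ y ∈ Set.uIcc a b, 6 * Real.exp (-|y|) ≤ B) :
    |Gfun a - Gfun b| ≤ B * |a - b| := by
  have := Convex.norm_image_sub_le_of_norm_hasDerivWithin_le
    (f := Gfun) (f' := fun y => (Real.cosh y ^ 2 - 2 * Real.sinh y ^ 2) / Real.cosh y ^ 3)
    (s := Set.uIcc a b) (C := B)
    (fun y _ => (hasDerivAt_Gfun y).hasDerivWithinAt)
    (fun y hy => le_trans (Gfun_deriv_bound y) (hB y hy))
    (convex_uIcc a b) (Set.right_mem_uIcc) (Set.left_mem_uIcc)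
  simpa [Real.norm_eq_abs] using this

set_option maxHeartbeats 2000000 in
/-- The second components q̃₁^τ of the standing solitary waves
converge uniformly on ℝ, linearly in τ, to
(u⁺)'(x) = −√(2μ) σ sech(√μ x + K₁) tanh(√μ x + K₁) as τ → 0. -/
theorem nlsh_solitary_derivative_uniform_linear_convergence (μ κ : ℝ)
    (hμ : 0 < μ) (hκ : 0 < κ) (K₁ : ℝ)
    (σ : ℝ) (hσ : σ = Real.sqrt (μ / κ)) :
    ∃ τ₀ : ℝ, 0 < τ₀ ∧ τ₀ < 1 / μ ∧ ∃ C > 0, ∀ τ : ℝ, 0 < τ → τ < τ₀ → ∀ x : ℝ,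
      |(-Real.sqrt (2 * μ) * σ / Real.sqrt (1 - μ * τ)) *
          (1 / Real.cosh (Real.sqrt (μ * (1 - μ * τ)) * x + K₁)) *
          Real.tanh (Real.sqrt (μ * (1 - μ * τ)) * x + K₁)
        - (-Real.sqrt (2 * μ) * σ) *
          (1 / Real.cosh (Real.sqrt μ * x + K₁)) *
          Real.tanh (Real.sqrt μ * x + K₁)| ≤ C * τ := by
  have hm : 0 < Real.sqrt μ := Real.sqrt_pos.mpr hμ
  set m : ℝ := Real.sqrt μ with hm_def
  have hσ0 : 0 ≤ σ := hσ ▸ Real.sqrt_nonneg _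
  set A : ℝ := Real.sqrt (2 * μ) * σ with hA_def
  have hA0 : 0 ≤ A := mul_nonneg (Real.sqrt_nonneg _) hσ0
  refine ⟨1 / (2 * μ), by positivity, ?_, A * μ * (2 + 12 * Real.exp |K₁|) + 1, ?_, ?_⟩
  · rw [div_lt_div_iff₀ (by positivity) hμ]; nlinarith
  · nlinarith [Real.exp_pos |K₁|, mul_nonneg (mul_nonneg hA0 hμ.le)
      (by positivity : (0:ℝ) ≤ 2 + 12 * Real.exp |K₁|)]
  intro τ hτ0 hτ1 x
  have hmt : μ * τ < 1 / 2 := by rw [lt_div_iff₀ (by positivity)] at hτ1; nlinarith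
  have hmt0 : 0 < μ * τ := mul_pos hμ hτ0
  have hu0 : (0:ℝ) < 1 - μ * τ := by linarith
  set r : ℝ := Real.sqrt (1 - μ * τ) with hr_def
  have hr_pos : 0 < r := Real.sqrt_pos.mpr hu0
  have hr2 : r ^ 2 = 1 - μ * τ := Real.sq_sqrt hu0.le
  have hr_le1 : r ≤ 1 := by nlinarith
  have hu_le_r : 1 - μ * τ ≤ r := by nlinarith
  have hr_half : 1 / 2 < r := by nlinarith
  have hsrw : Real.sqrt (μ * (1 - μ * τ)) = m * r := by
    rw [Real.sqrt_mul hμ.le]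
  rw [hsrw]
  set a : ℝ := m * r * x + K₁ with ha_def
  set b : ℝ := m * x + K₁ with hb_def
  -- rewrite the expression in terms of Gfun
  have key : -A / r * (1 / Real.cosh a) * Real.tanh a - -A * (1 / Real.cosh b) * Real.tanh b
      = -(A * ((1 / r) * Gfun a - Gfun b)) := by
    rw [mul_assoc (-A / r), mul_assoc (-A), Gfun_eq a, Gfun_eq b]
    field_simp
    ring
  rw [show (-Real.sqrt (2 * μ) * σ / r) = -A / r by rw [hA_def]; ring,
      show (-Real.sqrt (2 * μ) * σ) = -A by rw [hA_def]; ring, key, abs_neg, abs_mul,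
      abs_of_nonneg hA0]
  -- bound the two pieces
  have hGa := Gfun_abs_le_one a
  have h1r : 1 / r - 1 ≤ 2 * (μ * τ) := by
    have h : 1 / r ≤ 1 + 2 * (μ * τ) := by
      rw [div_le_iff₀ hr_pos]
      nlinarith [mul_nonneg (by nlinarith : (0:ℝ) ≤ 1 + 2 * (μ * τ))
        (by linarith : (0:ℝ) ≤ r - (1 - μ * τ))]
    linarith
  have h1r0 : 0 ≤ 1 / r - 1 := by
    rw [le_sub_iff_add_le, zero_add, le_div_iff₀ hr_pos]; linarith
  -- Lipschitz bound
  have hlip : |Gfun a - Gfun b| ≤ (6 * Real.exp (|K₁| - m * r * |x|)) * |a - b| := by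
    apply Gfun_lip
    intro y hy
    have hkey : m * r * |x| ≤ |y - K₁| := by
      rcases le_total 0 x with hx | hx
      · have h1 : m * r * x ≤ y - K₁ := by
          rcases Set.mem_uIcc.mp hy with ⟨h1, _⟩ | ⟨h1, _⟩
          · rw [ha_def] at h1; linarith
          · rw [hb_def] at h1
            nlinarith [mul_nonneg (mul_nonneg hm.le (by linarith : (0:ℝ) ≤ 1 - r)) hx]
        calc m * r * |x| = m * r * x := by rw [abs_of_nonneg hx]
          _ ≤ y - K₁ := h1
          _ ≤ |y - K₁| := le_abs_self _
      · have h1 : y - K₁ ≤ m * r * x := by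
          rcases Set.mem_uIcc.mp hy with ⟨_, h2⟩ | ⟨_, h2⟩
          · rw [hb_def] at h2
            nlinarith [mul_nonneg (mul_nonneg hm.le (by linarith : (0:ℝ) ≤ 1 - r))
              (by linarith : (0:ℝ) ≤ -x)]
          · rw [ha_def] at h2; linarith
        calc m * r * |x| = m * r * (-x) := by rw [abs_of_nonpos hx]
          _ ≤ -(y - K₁) := by linarith
          _ ≤ |y - K₁| := neg_le_abs _
    have habs : |y - K₁| ≤ |y| + |K₁| := by
      simpa [sub_eq_add_neg, abs_neg] using abs_add_le y (-K₁)
    have : -|y| ≤ |K₁| - m * r * |x| := by linarith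
    have := Real.exp_le_exp.mpr this
    linarith
  have hab : |a - b| ≤ m * (μ * τ) * |x| := by
    have he : a - b = m * (r - 1) * x := by rw [ha_def, hb_def]; ring
    rw [he, abs_mul, abs_of_nonpos (by nlinarith : m * (r - 1) ≤ 0)]
    have : -(m * (r - 1)) ≤ m * (μ * τ) := by nlinarith
    exact mul_le_mul_of_nonneg_right this (abs_nonneg x)
  have hte : (m * r * |x|) * Real.exp (-(m * r * |x|)) ≤ 1 := by
    rw [Real.exp_neg, ← div_eq_mul_inv, div_le_one (Real.exp_pos _)]
    linarith [Real.add_one_le_exp (m * r * |x|)]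
  have hmx : Real.exp (-(m * r * |x|)) * (m * |x|) ≤ 2 := by
    have h2t : m * |x| ≤ 2 * (m * r * |x|) := by
      nlinarith [mul_nonneg (mul_nonneg hm.le (abs_nonneg x)) (by linarith : (0:ℝ) ≤ 2 * r - 1)]
    calc Real.exp (-(m * r * |x|)) * (m * |x|)
        ≤ Real.exp (-(m * r * |x|)) * (2 * (m * r * |x|)) :=
          mul_le_mul_of_nonneg_left h2t (Real.exp_pos _).le
      _ = 2 * ((m * r * |x|) * Real.exp (-(m * r * |x|))) := by ring
      _ ≤ 2 * 1 := by linarith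
      _ = 2 := by norm_num
  have hG2 : |Gfun a - Gfun b| ≤ 12 * Real.exp |K₁| * (μ * τ) := by
    have hexp : Real.exp (|K₁| - m * r * |x|) = Real.exp |K₁| * Real.exp (-(m * r * |x|)) := by
      rw [← Real.exp_add]; ring_nf
    calc |Gfun a - Gfun b| ≤ (6 * Real.exp (|K₁| - m * r * |x|)) * |a - b| := hlip
      _ ≤ (6 * Real.exp (|K₁| - m * r * |x|)) * (m * (μ * τ) * |x|) :=
          mul_le_mul_of_nonneg_left hab (by positivity)
      _ = 6 * Real.exp |K₁| * (μ * τ) * (Real.exp (-(m * r * |x|)) * (m * |x|)) := by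
          rw [hexp]; ring
      _ ≤ 6 * Real.exp |K₁| * (μ * τ) * 2 := by
          apply mul_le_mul_of_nonneg_left hmx (by positivity)
      _ = 12 * Real.exp |K₁| * (μ * τ) := by ring
  -- assemble
  have hsplit : |1 / r * Gfun a - Gfun b| ≤ (1 / r - 1) * |Gfun a| + |Gfun a - Gfun b| := by
    have : 1 / r * Gfun a - Gfun b = (1 / r - 1) * Gfun a + (Gfun a - Gfun b) := by ring
    rw [this]
    calc |(1 / r - 1) * Gfun a + (Gfun a - Gfun b)|
        ≤ |(1 / r - 1) * Gfun a| + |Gfun a - Gfun b| := abs_add_le _ _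
      _ = (1 / r - 1) * |Gfun a| + |Gfun a - Gfun b| := by
          rw [abs_mul, abs_of_nonneg h1r0]
  have hpiece : (1 / r - 1) * |Gfun a| ≤ 2 * (μ * τ) := by
    nlinarith [abs_nonneg (Gfun a)]
  calc A * |1 / r * Gfun a - Gfun b|
      ≤ A * ((1 / r - 1) * |Gfun a| + |Gfun a - Gfun b|) :=
        mul_le_mul_of_nonneg_left hsplit hA0
    _ ≤ A * (2 * (μ * τ) + 12 * Real.exp |K₁| * (μ * τ)) := by
        apply mul_le_mul_of_nonneg_left (by linarith) hA0
    _ = A * μ * (2 + 12 * Real.exp |K₁|) * τ := by ring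
    _ ≤ (A * μ * (2 + 12 * Real.exp |K₁|) + 1) * τ := by nlinarith
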